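/- arXiv:math/9805056 — 2 statements merged into one kernel-verified Lean document; each statement's English description precedes it below -/
import Mathlib

section
/- Every complex realization of the MacLane configuration C₈ is projectively equivalent to one of the two explicit realizations: if φ assigns to the lines l₀,…,l₇ of C₈ pairwise distinct projective lines in ℂP² and to the twelve points of C₈ points of ℂP² such that φ(p) ∈ φ(l) holds if and only if p is incident to l in C₈, then there exist a projective linear transformation T of ℂP² and a complex number ω with ω² + ω + 1 = 0 such that T(φ(lᵢ)) = Lᵢ(ω) for all i = 0,…,7. -/
open scoped LinearAlgebra.Projectivization

noncomputable section

/-- The complex projective plane. -/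
abbrev CP2 := ℙ ℂ (Fin 3 → ℂ)

instance : TopologicalSpace CP2 := inferInstanceAs (TopologicalSpace (Quotient _))

/-- The projective line `{(z₀:z₁:z₂) | a·z₀ + b·z₁ + c·z₂ = 0}` in `ℂP²`. -/
def projLine (a b c : ℂ) : Set CP2 :=
  {P | a * P.rep 0 + b * P.rep 1 + c * P.rep 2 = 0}

/-- A subset of `ℂP²` is a projective line if it is the zero locus of a nonzero
linear form. -/
def IsProjLine (s : Set CP2) : Prop :=
  ∃ a b c : ℂ, (a, b, c) ≠ (0, 0, 0) ∧ s = projLine a b c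

/-- The eight lines `L₀(ω), …, L₇(ω)`:
`L₀ : z₀ = 0`, `L₁ : z₁ = 0`, `L₂ : z₁ = z₀`, `L₃ : z₂ = 0`, `L₄ : z₂ = z₀`,
`L₅ : z₂ + ωz₁ = 0`, `L₆ : z₂ + ωz₁ = (ω+1)z₀`, `L₇ : (ω+1)z₁ + z₂ = z₀`. -/
def L (ω : ℂ) : Fin 8 → Set CP2 :=
  ![projLine 1 0 0,
    projLine 0 1 0,
    projLine (-1) 1 0,
    projLine 0 0 1,
    projLine (-1) 0 1,
    projLine 0 ω 1,
    projLine (-(ω + 1)) ω 1,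
    projLine (-1) (ω + 1) 1]

/-- `ω⁺ = exp(2πi/3)`. -/
def ωp : ℂ := Complex.exp (2 * Real.pi * Complex.I / 3)

/-- `ω⁻ = exp(-2πi/3)`. -/
def ωn : ℂ := Complex.exp (-(2 * Real.pi * Complex.I) / 3)

/-- The incidence pattern of the MacLane configuration `C₈`: the `j`-th point is
incident exactly to the lines `lᵢ` with `i` in the `j`-th entry of the list
`{0,1,2}, {0,3,4}, {0,5,6}, {0,7}, {1,3,5}, {1,4,7}, {1,6}, {2,3}, {2,4,6},
{2,5,7}, {3,6,7}, {4,5}`. -/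
def mlPattern : Fin 12 → Finset (Fin 8) :=
  ![{0, 1, 2}, {0, 3, 4}, {0, 5, 6}, {0, 7}, {1, 3, 5}, {1, 4, 7}, {1, 6}, {2, 3},
    {2, 4, 6}, {2, 5, 7}, {3, 6, 7}, {4, 5}]

/-- The projective transformation of `ℂP²` induced by a linear automorphism of `ℂ³`. -/
def projTransform (g : (Fin 3 → ℂ) ≃ₗ[ℂ] (Fin 3 → ℂ)) : CP2 → CP2 :=
  Projectivization.map (g : (Fin 3 → ℂ) →ₗ[ℂ] (Fin 3 → ℂ)) g.injective

namespace MacLaneAux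

lemma mem_projLine_mk (a b c : ℂ) {x : Fin 3 → ℂ} (hx : x ≠ 0) :
    Projectivization.mk ℂ x hx ∈ projLine a b c ↔ a * x 0 + b * x 1 + c * x 2 = 0 := by
  obtain ⟨u, hu⟩ := Projectivization.exists_smul_eq_mk_rep ℂ x hx
  have h1 : (Projectivization.mk ℂ x hx) ∈ projLine a b c ↔
      a * (u • x) 0 + b * (u • x) 1 + c * (u • x) 2 = 0 := by
    rw [hu]; exact Iff.rfl
  rw [h1]
  simp only [Pi.smul_apply, Units.smul_def, smul_eq_mul]
  have : a * ((u:ℂ) * x 0) + b * ((u:ℂ) * x 1) + c * ((u:ℂ) * x 2)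
      = (u:ℂ) * (a * x 0 + b * x 1 + c * x 2) := by ring
  rw [this, mul_eq_zero]
  simp [u.ne_zero]

lemma projTransform_mk (g : (Fin 3 → ℂ) ≃ₗ[ℂ] (Fin 3 → ℂ)) {x : Fin 3 → ℂ} (hx : x ≠ 0) :
    projTransform g (Projectivization.mk ℂ x hx)
      = Projectivization.mk ℂ (g x) (by simp [hx]) := by
  exact Projectivization.map_mk (g : (Fin 3 → ℂ) →ₗ[ℂ] (Fin 3 → ℂ)) g.injective x hx

lemma image_projLine (g : (Fin 3 → ℂ) ≃ₗ[ℂ] (Fin 3 → ℂ)) (a b c a' b' c' : ℂ)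
    (h : ∀ x : Fin 3 → ℂ, a * x 0 + b * x 1 + c * x 2 = 0 ↔
      a' * g x 0 + b' * g x 1 + c' * g x 2 = 0) :
    projTransform g '' projLine a b c = projLine a' b' c' := by
  ext P
  constructor
  · rintro ⟨Q, hQ, rfl⟩
    have hQ' : a * Q.rep 0 + b * Q.rep 1 + c * Q.rep 2 = 0 := hQ
    rw [← Projectivization.mk_rep Q, projTransform_mk g Q.rep_nonzero,
      mem_projLine_mk]
    exact (h Q.rep).1 hQ'
  · intro hP
    have hP' : a' * P.rep 0 + b' * P.rep 1 + c' * P.rep 2 = 0 := hP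
    have hx : g.symm P.rep ≠ 0 := by
      simp [P.rep_nonzero]
    refine ⟨Projectivization.mk ℂ (g.symm P.rep) hx, ?_, ?_⟩
    · rw [mem_projLine_mk]
      refine (h _).2 ?_
      simpa using hP'
    · rw [projTransform_mk g hx]
      have : g (g.symm P.rep) = P.rep := g.apply_symm_apply _
      exact ((Projectivization.mk_eq_mk_iff' ℂ _ _ _ P.rep_nonzero).2
        ⟨1, by simp [this]⟩).trans (Projectivization.mk_rep P)

end MacLaneAux
namespace MacLaneAux

lemma image_projLine' (g : (Fin 3 → ℂ) ≃ₗ[ℂ] (Fin 3 → ℂ)) (κ a b c a' b' c' : ℂ)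
    (hκ : κ ≠ 0)
    (h : ∀ x : Fin 3 → ℂ, κ * (a * x 0 + b * x 1 + c * x 2)
      = a' * g x 0 + b' * g x 1 + c' * g x 2) :
    projTransform g '' projLine a b c = projLine a' b' c' := by
  apply image_projLine
  intro x
  rw [← h x]
  constructor
  · intro h0; rw [h0, mul_zero]
  · intro h0; exact (mul_eq_zero.1 h0).resolve_left hκ

end MacLaneAux
namespace MacLaneAux

lemma image_projLine'' (g : (Fin 3 → ℂ) ≃ₗ[ℂ] (Fin 3 → ℂ)) (κ μ a b c a' b' c' : ℂ)
    (hκ : κ ≠ 0) (hμ : μ ≠ 0)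
    (h : ∀ x : Fin 3 → ℂ, κ * (a * x 0 + b * x 1 + c * x 2)
      = μ * (a' * g x 0 + b' * g x 1 + c' * g x 2)) :
    projTransform g '' projLine a b c = projLine a' b' c' := by
  apply image_projLine
  intro x
  constructor
  · intro h0
    have h1 : κ * (a * x 0 + b * x 1 + c * x 2) = 0 := by rw [h0, mul_zero]
    have h2 := h1.symm.trans (h x)
    exact ((mul_eq_zero.1 h2.symm).resolve_left hμ)
  · intro h0
    have h1 : κ * (a * x 0 + b * x 1 + c * x 2) = 0 := by rw [h x, h0, mul_zero]
    exact (mul_eq_zero.1 h1).resolve_left hκ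

end MacLaneAux
namespace MacLaneAux

open scoped Matrix


lemma main_aux (a b c : Fin 8 → ℂ) (r : Fin 12 → Fin 3 → ℂ)
    (hz : ∀ j i, i ∈ mlPattern j → a i * r j 0 + b i * r j 1 + c i * r j 2 = 0)
    (hnz : ∀ j i, i ∉ mlPattern j → a i * r j 0 + b i * r j 1 + c i * r j 2 ≠ 0) :
    ∃ (g : (Fin 3 → ℂ) ≃ₗ[ℂ] (Fin 3 → ℂ)) (ω : ℂ), ω ^ 2 + ω + 1 = 0 ∧
      ∀ i, projTransform g '' projLine (a i) (b i) (c i) = L ω i := by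
  classical
  obtain ⟨B, hB⟩ : ∃ B' : Matrix (Fin 3) (Fin 3) ℂ,
      B' = Matrix.of ![![a 0, b 0, c 0], ![a 1, b 1, c 1], ![a 3, b 3, c 3]] := ⟨_, rfl⟩
  have hdetB : B.det ≠ 0 := by
    intro hd
    obtain ⟨v, hv0, hvB⟩ := Matrix.exists_vecMul_eq_zero_iff.mpr hd
    have h0 := congrFun hvB 0
    have h1 := congrFun hvB 1
    have h2 := congrFun hvB 2
    simp only [hB, Matrix.vecMul, dotProduct, Fin.sum_univ_three, Matrix.of_apply,
      Matrix.cons_val', Matrix.cons_val_zero, Matrix.cons_val_one, Matrix.head_cons,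
      Matrix.head_fin_const, Matrix.empty_val', Matrix.cons_val_fin_one, Pi.zero_apply,
      Matrix.cons_val_two, Matrix.tail_cons] at h0 h1 h2
    have e : ∀ j : Fin 12,
        v 0 * (a 0 * r j 0 + b 0 * r j 1 + c 0 * r j 2) +
        v 1 * (a 1 * r j 0 + b 1 * r j 1 + c 1 * r j 2) +
        v 2 * (a 3 * r j 0 + b 3 * r j 1 + c 3 * r j 2) = 0 := by
      intro j
      linear_combination r j 0 * h0 + r j 1 * h1 + r j 2 * h2
    have hv2 : v 2 = 0 := by
      have h' : v 2 * (a 3 * r 0 0 + b 3 * r 0 1 + c 3 * r 0 2) = 0 := by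
        linear_combination e 0 - v 0 * (hz 0 0 (by decide)) - v 1 * (hz 0 1 (by decide))
      exact (mul_eq_zero.1 h').resolve_right (hnz 0 3 (by decide))
    have hv1 : v 1 = 0 := by
      have h' : v 1 * (a 1 * r 1 0 + b 1 * r 1 1 + c 1 * r 1 2) = 0 := by
        linear_combination e 1 - v 0 * (hz 1 0 (by decide)) - v 2 * (hz 1 3 (by decide))
      exact (mul_eq_zero.1 h').resolve_right (hnz 1 1 (by decide))
    have hv00 : v 0 = 0 := by
      have h' : v 0 * (a 0 * r 4 0 + b 0 * r 4 1 + c 0 * r 4 2) = 0 := by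
        linear_combination e 4 - v 1 * (hz 4 1 (by decide)) - v 2 * (hz 4 3 (by decide))
      exact (mul_eq_zero.1 h').resolve_right (hnz 4 0 (by decide))
    apply hv0
    funext k
    fin_cases k <;> assumption
  have hB1 : B⁻¹ * B = 1 := Matrix.nonsing_inv_mul B (isUnit_iff_ne_zero.2 hdetB)
  have hdec : ∀ i : Fin 8, ∃ x y z : ℂ,
      a i = x * a 0 + y * a 1 + z * a 3 ∧ b i = x * b 0 + y * b 1 + z * b 3 ∧
      c i = x * c 0 + y * c 1 + z * c 3 := by
    intro i
    set wv := Matrix.vecMul ![a i, b i, c i] B⁻¹ with hw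
    have hvB : Matrix.vecMul wv B = ![a i, b i, c i] := by
      rw [hw, Matrix.vecMul_vecMul, hB1, Matrix.vecMul_one]
    refine ⟨wv 0, wv 1, wv 2, ?_, ?_, ?_⟩
    · have := congrFun hvB 0
      simp only [hB, Matrix.vecMul, dotProduct, Fin.sum_univ_three, Matrix.of_apply,
        Matrix.cons_val', Matrix.cons_val_zero, Matrix.cons_val_one, Matrix.head_cons,
        Matrix.cons_val_two, Matrix.tail_cons, Matrix.empty_val', Matrix.cons_val_fin_one,
        Matrix.vecHead, Matrix.vecTail] at this
      exact this.symm
    · have := congrFun hvB 1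
      simp only [hB, Matrix.vecMul, dotProduct, Fin.sum_univ_three, Matrix.of_apply,
        Matrix.cons_val', Matrix.cons_val_zero, Matrix.cons_val_one, Matrix.head_cons,
        Matrix.cons_val_two, Matrix.tail_cons, Matrix.empty_val', Matrix.cons_val_fin_one,
        Matrix.vecHead, Matrix.vecTail] at this
      exact this.symm
    · have := congrFun hvB 2
      simp only [hB, Matrix.vecMul, dotProduct, Fin.sum_univ_three, Matrix.of_apply,
        Matrix.cons_val', Matrix.cons_val_zero, Matrix.cons_val_one, Matrix.head_cons,
        Matrix.cons_val_two, Matrix.tail_cons, Matrix.empty_val', Matrix.cons_val_fin_one,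
        Matrix.vecHead, Matrix.vecTail] at this
      exact this.symm
  obtain ⟨x2, y2, z2, hA2, hB2, hC2⟩ := hdec 2
  obtain ⟨x4, y4, z4, hA4, hB4, hC4⟩ := hdec 4
  obtain ⟨x5, y5, z5, hA5, hB5, hC5⟩ := hdec 5
  obtain ⟨x6, y6, z6, hA6, hB6, hC6⟩ := hdec 6
  obtain ⟨x7, y7, z7, hA7, hB7, hC7⟩ := hdec 7
  have hdot2 : ∀ j : Fin 12, a 2 * r j 0 + b 2 * r j 1 + c 2 * r j 2 =
      x2 * (a 0 * r j 0 + b 0 * r j 1 + c 0 * r j 2) +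
      y2 * (a 1 * r j 0 + b 1 * r j 1 + c 1 * r j 2) +
      z2 * (a 3 * r j 0 + b 3 * r j 1 + c 3 * r j 2) := by
    intro j; rw [hA2, hB2, hC2]; ring
  have hdot4 : ∀ j : Fin 12, a 4 * r j 0 + b 4 * r j 1 + c 4 * r j 2 =
      x4 * (a 0 * r j 0 + b 0 * r j 1 + c 0 * r j 2) +
      y4 * (a 1 * r j 0 + b 1 * r j 1 + c 1 * r j 2) +
      z4 * (a 3 * r j 0 + b 3 * r j 1 + c 3 * r j 2) := by
    intro j; rw [hA4, hB4, hC4]; ring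
  have hdot5 : ∀ j : Fin 12, a 5 * r j 0 + b 5 * r j 1 + c 5 * r j 2 =
      x5 * (a 0 * r j 0 + b 0 * r j 1 + c 0 * r j 2) +
      y5 * (a 1 * r j 0 + b 1 * r j 1 + c 1 * r j 2) +
      z5 * (a 3 * r j 0 + b 3 * r j 1 + c 3 * r j 2) := by
    intro j; rw [hA5, hB5, hC5]; ring
  have hdot6 : ∀ j : Fin 12, a 6 * r j 0 + b 6 * r j 1 + c 6 * r j 2 =
      x6 * (a 0 * r j 0 + b 0 * r j 1 + c 0 * r j 2) +
      y6 * (a 1 * r j 0 + b 1 * r j 1 + c 1 * r j 2) +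
      z6 * (a 3 * r j 0 + b 3 * r j 1 + c 3 * r j 2) := by
    intro j; rw [hA6, hB6, hC6]; ring
  have hdot7 : ∀ j : Fin 12, a 7 * r j 0 + b 7 * r j 1 + c 7 * r j 2 =
      x7 * (a 0 * r j 0 + b 0 * r j 1 + c 0 * r j 2) +
      y7 * (a 1 * r j 0 + b 1 * r j 1 + c 1 * r j 2) +
      z7 * (a 3 * r j 0 + b 3 * r j 1 + c 3 * r j 2) := by
    intro j; rw [hA7, hB7, hC7]; ring
  -- z2 = 0
  have hz2 : z2 = 0 := by
    have h' : z2 * (a 3 * r 0 0 + b 3 * r 0 1 + c 3 * r 0 2) = 0 := by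
      linear_combination ((hdot2 0).symm.trans (hz 0 2 (by decide)))
        - x2 * (hz 0 0 (by decide)) - y2 * (hz 0 1 (by decide))
    exact (mul_eq_zero.1 h').resolve_right (hnz 0 3 (by decide))
  subst hz2
  -- y4 = 0
  have hy4 : y4 = 0 := by
    have h' : y4 * (a 1 * r 1 0 + b 1 * r 1 1 + c 1 * r 1 2) = 0 := by
      linear_combination ((hdot4 1).symm.trans (hz 1 4 (by decide)))
        - x4 * (hz 1 0 (by decide)) - z4 * (hz 1 3 (by decide))
    exact (mul_eq_zero.1 h').resolve_right (hnz 1 1 (by decide))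
  subst hy4
  -- x5 = 0
  have hx5 : x5 = 0 := by
    have h' : x5 * (a 0 * r 4 0 + b 0 * r 4 1 + c 0 * r 4 2) = 0 := by
      linear_combination ((hdot5 4).symm.trans (hz 4 5 (by decide)))
        - y5 * (hz 4 1 (by decide)) - z5 * (hz 4 3 (by decide))
    exact (mul_eq_zero.1 h').resolve_right (hnz 4 0 (by decide))
  subst hx5
  -- nonvanishing
  have hx2 : x2 ≠ 0 := by
    intro h0
    apply hnz 4 2 (by decide)
    rw [hdot2 4, h0]
    linear_combination y2 * (hz 4 1 (by decide))
  have hy2 : y2 ≠ 0 := by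
    intro h0
    apply hnz 1 2 (by decide)
    rw [hdot2 1, h0]
    linear_combination x2 * (hz 1 0 (by decide))
  have hx4 : x4 ≠ 0 := by
    intro h0
    apply hnz 4 4 (by decide)
    rw [hdot4 4, h0]
    linear_combination z4 * (hz 4 3 (by decide))
  have hz4 : z4 ≠ 0 := by
    intro h0
    apply hnz 0 4 (by decide)
    rw [hdot4 0, h0]
    linear_combination x4 * (hz 0 0 (by decide))
  have hy5 : y5 ≠ 0 := by
    intro h0
    apply hnz 1 5 (by decide)
    rw [hdot5 1, h0]
    linear_combination z5 * (hz 1 3 (by decide))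
  have hz5 : z5 ≠ 0 := by
    intro h0
    apply hnz 0 5 (by decide)
    rw [hdot5 0, h0]
    linear_combination y5 * (hz 0 1 (by decide))
  -- R1 : y6 * z5 = z6 * y5
  have R1 : y6 * z5 = z6 * y5 := by
    have h' : (y6 * z5 - z6 * y5) * (a 1 * r 2 0 + b 1 * r 2 1 + c 1 * r 2 2) = 0 := by
      linear_combination z5 * ((hdot6 2).symm.trans (hz 2 6 (by decide)))
        - z6 * ((hdot5 2).symm.trans (hz 2 5 (by decide)))
        - x6 * z5 * (hz 2 0 (by decide))
    have := (mul_eq_zero.1 h').resolve_right (hnz 2 1 (by decide))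
    exact sub_eq_zero.1 this
  -- R2 : x6 * y2 * z4 = y6 * x2 * z4 + z6 * x4 * y2
  have R2 : x6 * y2 * z4 = y6 * x2 * z4 + z6 * x4 * y2 := by
    have h' : (x6 * y2 * z4 - y6 * x2 * z4 - z6 * x4 * y2) *
        (a 0 * r 8 0 + b 0 * r 8 1 + c 0 * r 8 2) = 0 := by
      linear_combination y2 * z4 * ((hdot6 8).symm.trans (hz 8 6 (by decide)))
        - y6 * z4 * ((hdot2 8).symm.trans (hz 8 2 (by decide)))
        - z6 * y2 * ((hdot4 8).symm.trans (hz 8 4 (by decide)))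
    have := (mul_eq_zero.1 h').resolve_right (hnz 8 0 (by decide))
    linear_combination this
  -- y6 ≠ 0
  have hy6 : y6 ≠ 0 := by
    intro h0
    have hz6' : z6 = 0 := by
      have := R1
      rw [h0] at this
      simpa [hy5] using this.symm
    apply hnz 3 6 (by decide)
    rw [hdot6 3, h0, hz6']
    linear_combination x6 * (hz 3 0 (by decide))
  -- R3 : x7 * z4 = z7 * x4
  have R3 : x7 * z4 = z7 * x4 := by
    have h' : (x7 * z4 - z7 * x4) * (a 0 * r 5 0 + b 0 * r 5 1 + c 0 * r 5 2) = 0 := by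
      linear_combination z4 * ((hdot7 5).symm.trans (hz 5 7 (by decide)))
        - z7 * ((hdot4 5).symm.trans (hz 5 4 (by decide)))
        - y7 * z4 * (hz 5 1 (by decide))
    have := (mul_eq_zero.1 h').resolve_right (hnz 5 0 (by decide))
    exact sub_eq_zero.1 this
  -- R4 : x7 * y2 * z5 = y7 * x2 * z5 - z7 * x2 * y5
  have R4 : x7 * y2 * z5 = y7 * x2 * z5 - z7 * x2 * y5 := by
    have h' : (x7 * y2 * z5 - y7 * x2 * z5 + z7 * x2 * y5) *
        (a 0 * r 9 0 + b 0 * r 9 1 + c 0 * r 9 2) = 0 := by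
      linear_combination y2 * z5 * ((hdot7 9).symm.trans (hz 9 7 (by decide)))
        - y2 * z7 * ((hdot5 9).symm.trans (hz 9 5 (by decide)))
        - (z5 * y7 - z7 * y5) * ((hdot2 9).symm.trans (hz 9 2 (by decide)))
    have := (mul_eq_zero.1 h').resolve_right (hnz 9 0 (by decide))
    linear_combination this
  -- x7 ≠ 0
  have hx7 : x7 ≠ 0 := by
    intro h0
    have hz7' : z7 = 0 := by
      have := R3
      rw [h0] at this
      simpa [hx4] using this.symm
    apply hnz 6 7 (by decide)
    rw [hdot7 6, h0, hz7']
    linear_combination y7 * (hz 6 1 (by decide))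
  -- R5 : x7 * y6 = y7 * x6
  have R5 : x7 * y6 = y7 * x6 := by
    have h' : (x7 * y6 - y7 * x6) * (a 0 * r 10 0 + b 0 * r 10 1 + c 0 * r 10 2) = 0 := by
      linear_combination y6 * ((hdot7 10).symm.trans (hz 10 7 (by decide)))
        - y7 * ((hdot6 10).symm.trans (hz 10 6 (by decide)))
        + (y7 * z6 - y6 * z7) * (hz 10 3 (by decide))
    have := (mul_eq_zero.1 h').resolve_right (hnz 10 0 (by decide))
    exact sub_eq_zero.1 this
  -- the master equation
  have S1 : x6 * (y2 * z4 * y5) = y6 * (x2 * y5 * z4 + x4 * y2 * z5) := by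
    linear_combination y5 * R2 - x4 * y2 * R1
  have S2 : y7 * (x2 * z5 * x4) = x7 * (x2 * y5 * z4 + x4 * y2 * z5) := by
    linear_combination (-x4) * R4 - x2 * y5 * R3
  have master : (x2 * y5 * z4 + x4 * y2 * z5) ^ 2 = (x2 * y5 * z4) * (x4 * y2 * z5) := by
    have hm0 : x7 * y6 * ((x2 * y5 * z4 + x4 * y2 * z5) ^ 2
        - (x2 * y5 * z4) * (x4 * y2 * z5)) = 0 := by
      linear_combination (- y6 * (x2 * y5 * z4 + x4 * y2 * z5)) * S2
        - (y7 * x2 * z5 * x4) * S1 - ((x2 * y5 * z4) * (x4 * y2 * z5)) * R5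
    have h' := (mul_eq_zero.1 hm0).resolve_left (mul_ne_zero hx7 hy6)
    exact sub_eq_zero.1 h'
  have hY : x4 * y2 * z5 ≠ 0 := mul_ne_zero (mul_ne_zero hx4 hy2) hz5
  obtain ⟨ω, hωdef⟩ : ∃ w : ℂ, w = (x2 * y5 * z4) / (x4 * y2 * z5) := ⟨_, rfl⟩
  have he : ω * (x4 * y2 * z5) = x2 * y5 * z4 := by
    rw [hωdef]; exact div_mul_cancel₀ _ hY
  have hω : ω ^ 2 + ω + 1 = 0 := by
    have h2 : (x4 * y2 * z5) ^ 2 * (ω ^ 2 + ω + 1) = 0 := by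
      linear_combination (ω * (x4 * y2 * z5) + x2 * y5 * z4 + x4 * y2 * z5) * he + master
    exact (mul_eq_zero.1 h2).resolve_left (pow_ne_zero 2 hY)
  -- the transformation
  obtain ⟨M, hM⟩ : ∃ M' : Matrix (Fin 3) (Fin 3) ℂ,
      M' = Matrix.diagonal ![-(x2 * x4), y2 * x4, x2 * z4] * B := ⟨_, rfl⟩
  have hM0 : ∀ x : Fin 3 → ℂ,
      (M *ᵥ x) 0 = -(x2 * x4) * (a 0 * x 0 + b 0 * x 1 + c 0 * x 2) := by
    intro x
    simp [hM, hB, Matrix.mulVec, dotProduct, Fin.sum_univ_three, Matrix.mul_apply,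
      Matrix.diagonal_apply, Matrix.of_apply, Matrix.cons_val_zero, Matrix.cons_val_one,
      Matrix.head_cons, Matrix.cons_val_two, Matrix.tail_cons, Matrix.vecHead, Matrix.vecTail]
    ring
  have hM1 : ∀ x : Fin 3 → ℂ,
      (M *ᵥ x) 1 = y2 * x4 * (a 1 * x 0 + b 1 * x 1 + c 1 * x 2) := by
    intro x
    simp [hM, hB, Matrix.mulVec, dotProduct, Fin.sum_univ_three, Matrix.mul_apply,
      Matrix.diagonal_apply, Matrix.of_apply, Matrix.cons_val_zero, Matrix.cons_val_one,
      Matrix.head_cons, Matrix.cons_val_two, Matrix.tail_cons, Matrix.vecHead, Matrix.vecTail]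
    ring
  have hM2 : ∀ x : Fin 3 → ℂ,
      (M *ᵥ x) 2 = x2 * z4 * (a 3 * x 0 + b 3 * x 1 + c 3 * x 2) := by
    intro x
    simp [hM, hB, Matrix.mulVec, dotProduct, Fin.sum_univ_three, Matrix.mul_apply,
      Matrix.diagonal_apply, Matrix.of_apply, Matrix.cons_val_zero, Matrix.cons_val_one,
      Matrix.head_cons, Matrix.cons_val_two, Matrix.tail_cons, Matrix.vecHead, Matrix.vecTail]
    ring
  have hdetM : M.det ≠ 0 := by
    rw [hM, Matrix.det_mul, Matrix.det_diagonal, Fin.prod_univ_three]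
    simp only [Matrix.cons_val_zero, Matrix.cons_val_one, Matrix.head_cons,
      Matrix.cons_val_two, Matrix.tail_cons, Matrix.vecHead, Matrix.vecTail]
    exact mul_ne_zero (mul_ne_zero (mul_ne_zero (neg_ne_zero.2 (mul_ne_zero hx2 hx4))
      (mul_ne_zero hy2 hx4)) (mul_ne_zero hx2 hz4)) hdetB
  have hMinv : Invertible M := M.invertibleOfIsUnitDet (isUnit_iff_ne_zero.2 hdetM)
  refine ⟨M.toLinearEquiv' hMinv, ω, hω, ?_⟩
  have hg : ∀ x : Fin 3 → ℂ, (M.toLinearEquiv' hMinv) x = M *ᵥ x := fun x => rfl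
  intro i
  fin_cases i
  · show projTransform _ '' projLine (a 0) (b 0) (c 0) = projLine 1 0 0
    refine image_projLine' _ (-(x2 * x4)) _ _ _ _ _ _
      (neg_ne_zero.2 (mul_ne_zero hx2 hx4)) ?_
    intro x
    rw [hg x, hM0 x, hM1 x, hM2 x]
    ring
  · show projTransform _ '' projLine (a 1) (b 1) (c 1) = projLine 0 1 0
    refine image_projLine' _ (y2 * x4) _ _ _ _ _ _ (mul_ne_zero hy2 hx4) ?_
    intro x
    rw [hg x, hM0 x, hM1 x, hM2 x]
    ring
  · show projTransform _ '' projLine (a 2) (b 2) (c 2) = projLine (-1) 1 0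
    refine image_projLine' _ x4 _ _ _ _ _ _ hx4 ?_
    intro x
    rw [hg x, hM0 x, hM1 x, hM2 x, hA2, hB2, hC2]
    ring
  · show projTransform _ '' projLine (a 3) (b 3) (c 3) = projLine 0 0 1
    refine image_projLine' _ (x2 * z4) _ _ _ _ _ _ (mul_ne_zero hx2 hz4) ?_
    intro x
    rw [hg x, hM0 x, hM1 x, hM2 x]
    ring
  · show projTransform _ '' projLine (a 4) (b 4) (c 4) = projLine (-1) 0 1
    refine image_projLine' _ x2 _ _ _ _ _ _ hx2 ?_
    intro x
    rw [hg x, hM0 x, hM1 x, hM2 x, hA4, hB4, hC4]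
    ring
  · show projTransform _ '' projLine (a 5) (b 5) (c 5) = projLine 0 ω 1
    refine image_projLine'' _ (x2 * z4) z5 _ _ _ _ _ _ (mul_ne_zero hx2 hz4) hz5 ?_
    intro x
    rw [hg x, hM0 x, hM1 x, hM2 x, hA5, hB5, hC5]
    linear_combination (-(a 1 * x 0 + b 1 * x 1 + c 1 * x 2)) * he
  · show projTransform _ '' projLine (a 6) (b 6) (c 6) = projLine (-(ω + 1)) ω 1
    refine image_projLine'' _ (x2 * y2 * z4 * y5) (y2 * z5 * y6) _ _ _ _ _ _
      (mul_ne_zero (mul_ne_zero (mul_ne_zero hx2 hy2) hz4) hy5)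
      (mul_ne_zero (mul_ne_zero hy2 hz5) hy6) ?_
    intro x
    rw [hg x, hM0 x, hM1 x, hM2 x, hA6, hB6, hC6]
    linear_combination
      (-(a 1 * x 0 + b 1 * x 1 + c 1 * x 2) * y2 * y6
        - (a 0 * x 0 + b 0 * x 1 + c 0 * x 2) * x2 * y6) * he
      + (-(a 3 * x 0 + b 3 * x 1 + c 3 * x 2) * x2 * y2 * z4
        - (a 0 * x 0 + b 0 * x 1 + c 0 * x 2) * x2 * x4 * y2) * R1
      + ((a 0 * x 0 + b 0 * x 1 + c 0 * x 2) * x2 * y5) * R2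
  · show projTransform _ '' projLine (a 7) (b 7) (c 7) = projLine (-1) (ω + 1) 1
    refine image_projLine'' _ (x2 * x2 * x4 * z5) (x7 * x2 * z5) _ _ _ _ _ _
      (mul_ne_zero (mul_ne_zero (mul_ne_zero hx2 hx2) hx4) hz5)
      (mul_ne_zero (mul_ne_zero hx7 hx2) hz5) ?_
    intro x
    rw [hg x, hM0 x, hM1 x, hM2 x, hA7, hB7, hC7]
    linear_combination
      (-(a 1 * x 0 + b 1 * x 1 + c 1 * x 2) * x2 * x4) * R4
      + (-(a 1 * x 0 + b 1 * x 1 + c 1 * x 2) * x2 * x2 * y5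
        - (a 3 * x 0 + b 3 * x 1 + c 3 * x 2) * x2 * x2 * z5) * R3
      + (-(a 1 * x 0 + b 1 * x 1 + c 1 * x 2) * x7 * x2) * he

end MacLaneAux
/-- Every complex realization of the MacLane configuration `C₈` is projectively
equivalent to one of the two explicit realizations `(Lᵢ(ω))ᵢ` with `ω² + ω + 1 = 0`. -/
theorem maclane_realization_classification
    (ℓ : Fin 8 → Set CP2) (pt : Fin 12 → CP2)
    (hdist : Function.Injective ℓ)
    (hline : ∀ i, IsProjLine (ℓ i))
    (hinc : ∀ (j : Fin 12) (i : Fin 8), pt j ∈ ℓ i ↔ i ∈ mlPattern j) :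
    ∃ (g : (Fin 3 → ℂ) ≃ₗ[ℂ] (Fin 3 → ℂ)) (ω : ℂ),
      ω ^ 2 + ω + 1 = 0 ∧ ∀ i, projTransform g '' ℓ i = L ω i := by
  classical
  choose a b c hne heq using hline
  have hz : ∀ (j : Fin 12) (i : Fin 8), i ∈ mlPattern j →
      a i * (pt j).rep 0 + b i * (pt j).rep 1 + c i * (pt j).rep 2 = 0 := by
    intro j i hij
    have h := (hinc j i).2 hij
    rw [heq i] at h
    exact h
  have hnz : ∀ (j : Fin 12) (i : Fin 8), i ∉ mlPattern j →
      a i * (pt j).rep 0 + b i * (pt j).rep 1 + c i * (pt j).rep 2 ≠ 0 := by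
    intro j i hij hcon
    exact hij ((hinc j i).1 (by rw [heq i]; exact hcon))
  obtain ⟨g, ω, h1, h2⟩ := MacLaneAux.main_aux a b c (fun j => (pt j).rep) hz hnz
  exact ⟨g, ω, h1, fun i => by rw [heq i]; exact h2 i⟩
end
end

section
/- Let C be a finite non-degenerate projective configuration and let g, g' : 𝒜 → F be two maps with g(i,p)·g'(i,p)⁻¹ ∈ [F,F] for every (i,p) ∈ 𝒜. Then there exists a group isomorphism G(g)/γ₄G(g) → G(g')/γ₄G(g') which, for every i = 1,…,n, carries the class of wᵢ to an element congruent to the class of wᵢ modulo the commutator subgroup of G(g')/γ₄G(g'). -/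
open scoped Classical

namespace Rybnikov7

/- A finite non-degenerate projective configuration with lines `l₀, l₁, …, lₙ`
(indexed by `Fin (n+1)`, `l₀` the line at infinity) and points of type `P`,
with incidence relation `inc`.  The free group `F` has generators `w i` (`i : Fin n`),
where `w i` corresponds to `w_{i+1}`, i.e. to the line `l_{i.succ}`. -/

variable {n : ℕ} {P : Type*}

abbrev F (n : ℕ) := FreeGroup (Fin n)

/-- `w i (p)= g(i,p)⁻¹ · wᵢ · g(i,p)`. -/
def wp (g : Fin n → P → F n) (p : P) (i : Fin n) : F n :=
  (g i p)⁻¹ * FreeGroup.of i * g i p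

/-- The increasing list `i₁ < i₂ < … < i_k` of (generator) indices of the lines
through `p` (among `l₁, …, lₙ`). -/
noncomputable def sList [Fintype P] (inc : Fin (n + 1) → P → Prop) (p : P) :
    List (Fin n) :=
  (Finset.univ.filter fun i : Fin n => inc i.succ p).sort (· ≤ ·)

/-- `c_α(p) = w_{i_α}(p) ⋯ w_{i₁}(p) · w_{i_k}(p) ⋯ w_{i_{α+1}}(p)`
(for `α = 0` this is `c₀(p) = c_k(p) = w_{i_k}(p) ⋯ w_{i₁}(p)`). -/
noncomputable def cword [Fintype P] (inc : Fin (n + 1) → P → Prop)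
    (g : Fin n → P → F n) (p : P) (α : ℕ) : F n :=
  (((sList inc p).take α).reverse.map (wp g p)).prod *
    (((sList inc p).drop α).reverse.map (wp g p)).prod

/-- The set of relators `r_g(i,p) = c_{α-1}(p)⁻¹ · c_α(p)` for `(i,p) ∈ 𝒜`
(`p ∈ 𝒫₀`, `l_{i.succ}` through `p`) with `i` not minimal among the lines through `p`;
here `α - 1` is the position `(sList inc p).idxOf i` of `i` in the increasing list. -/
noncomputable def relSet [Fintype P] (inc : Fin (n + 1) → P → Prop)
    (g : Fin n → P → F n) : Set (F n) :=
  {x | ∃ (i : Fin n) (p : P), ¬ inc 0 p ∧ inc i.succ p ∧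
    (sList inc p).idxOf i ≠ 0 ∧
    x = (cword inc g p ((sList inc p).idxOf i))⁻¹ *
        cword inc g p ((sList inc p).idxOf i + 1)}

/-- `G(g)`, the group presented by the relators `R(g)`. -/
noncomputable abbrev G [Fintype P] (inc : Fin (n + 1) → P → Prop)
    (g : Fin n → P → F n) :=
  PresentedGroup (relSet inc g)

end Rybnikov7

/-! Modulo `γ₄F`, the conjugate `wᵢ(p) = g⁻¹ wᵢ g` differs from the one built from `g'` by
`g⁻¹ ⁅wᵢ, g g'⁻¹⁆ g ∈ γ₃F`, which is central in `F/γ₄F`. Hence `c_α(p)` for `g` is `c_α(p)` for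
`g'` times a central factor that does not depend on `α`, and the relators `r_g(i,p)` and
`r_{g'}(i,p)` have the same image in `F/γ₄F`. Therefore `⟨⟨R(g)⟩⟩ γ₄F = ⟨⟨R(g')⟩⟩ γ₄F`, and
`G(g)/γ₄G(g) ≅ F/⟨⟨R(g)⟩⟩ γ₄F = F/⟨⟨R(g')⟩⟩ γ₄F ≅ G(g')/γ₄G(g')`, an isomorphism fixing every
generator. -/

open Subgroup

open scoped commutatorElement

section LowerCentralSeries

variable {Γ : Type*} [Group Γ]

theorem conj_mul_inv_conj_mem_lowerCentralSeries_two {x h h' : Γ}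
    (hh : h * h'⁻¹ ∈ commutator Γ) :
    (h⁻¹ * x * h) * (h'⁻¹ * x * h')⁻¹ ∈ (⊤ : Subgroup Γ).lowerCentralSeries 2 := by
  have hcomm : ⁅x, h * h'⁻¹⁆ ∈ (⊤ : Subgroup Γ).lowerCentralSeries 2 := by
    rw [Subgroup.lowerCentralSeries_succ, commutator_comm]
    exact commutator_mem_commutator (mem_top x) hh
  -- `h⁻¹ x h (h'⁻¹ x h')⁻¹ = h⁻¹ ⁅x, h h'⁻¹⁆ h`
  convert (lowerCentralSeries_normal ⊤ 2).conj_mem _ hcomm h⁻¹ using 1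
  simp only [commutatorElement_def]
  group

theorem QuotientGroup.mk_mem_center_of_mem_lowerCentralSeries {k : ℕ} {x : Γ}
    (hx : x ∈ (⊤ : Subgroup Γ).lowerCentralSeries k) :
    (x : Γ ⧸ (⊤ : Subgroup Γ).lowerCentralSeries (k + 1)) ∈ center _ := by
  refine mem_center_iff.mpr fun y => ?_
  induction y using QuotientGroup.induction_on with | H y => ?_
  have hxy : ⁅x, y⁆ ∈ (⊤ : Subgroup Γ).lowerCentralSeries (k + 1) :=
    commutator_mem_commutator hx (mem_top y)
  rw [← QuotientGroup.eq_one_iff, ← QuotientGroup.mk'_apply, map_commutatorElement,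
    commutatorElement_eq_one_iff_mul_comm] at hxy
  exact hxy.symm

theorem Subgroup.normalClosure_sup_eq_comap (s : Set Γ) (N : Subgroup Γ) [N.Normal] :
    normalClosure s ⊔ N =
      (normalClosure ((↑) '' s : Set (Γ ⧸ N))).comap (QuotientGroup.mk' N) := by
  rw [← QuotientGroup.coe_mk', ← map_normalClosure s _ (QuotientGroup.mk'_surjective N),
    comap_map_eq, QuotientGroup.ker_mk']

theorem QuotientGroup.map_mk'_sup_lowerCentralSeries (N : Subgroup Γ) [N.Normal] (k : ℕ) :
    (N ⊔ (⊤ : Subgroup Γ).lowerCentralSeries k).map (QuotientGroup.mk' N) =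
      (⊤ : Subgroup (Γ ⧸ N)).lowerCentralSeries k := by
  rw [Subgroup.map_sup, map_lowerCentralSeries,
    map_top_of_surjective _ (QuotientGroup.mk'_surjective N), map_mk'_self, bot_sup_eq]

end LowerCentralSeries

namespace PresentedGroup

variable {α : Type*} (rels : Set (FreeGroup α)) (k : ℕ)

noncomputable def quotientLowerCentralSeriesEquiv :
    PresentedGroup rels ⧸ (⊤ : Subgroup (PresentedGroup rels)).lowerCentralSeries k ≃*
      FreeGroup α ⧸ (normalClosure rels ⊔ (⊤ : Subgroup (FreeGroup α)).lowerCentralSeries k) :=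
  (QuotientGroup.quotientMulEquivOfEq
    (QuotientGroup.map_mk'_sup_lowerCentralSeries (normalClosure rels) k).symm).trans
    (QuotientGroup.quotientQuotientEquivQuotient _ _ le_sup_left)

theorem quotientLowerCentralSeriesEquiv_mk_of (x : α) :
    quotientLowerCentralSeriesEquiv rels k (of x : PresentedGroup rels) =
      (FreeGroup.of x : FreeGroup α ⧸ _) :=
  QuotientGroup.quotientQuotientEquivQuotientAux_mk_mk _ _ le_sup_left _

end PresentedGroup

section CentralCorrection

variable {Q ι : Type*} [Group Q] {l : List ι}

theorem List.prod_map_mem_center {z : ι → Q} (hz : ∀ i ∈ l, z i ∈ center Q) :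
    (l.map z).prod ∈ center Q :=
  list_prod_mem (List.forall_mem_map.mpr hz)

theorem List.Perm.prod_map_eq_of_mem_center {l' : List ι} {z : ι → Q} (hl : l.Perm l')
    (hz : ∀ i ∈ l, z i ∈ center Q) : (l.map z).prod = (l'.map z).prod :=
  (hl.map z).prod_eq' <| List.pairwise_of_forall_mem_list fun x _ y hy => by
    obtain ⟨i, hi, rfl⟩ := List.mem_map.mp hy
    exact mem_center_iff.mp (hz i hi) x

variable {a a' : ι → Q}

theorem List.prod_map_eq_mul_prod_map_of_mem_center (h : ∀ i ∈ l, a' i * (a i)⁻¹ ∈ center Q) :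
    (l.map a').prod = (l.map fun i => a' i * (a i)⁻¹).prod * (l.map a).prod := by
  induction l with
  | nil => simp
  | cons i l ih =>
    have hl : ∀ j ∈ l, a' j * (a j)⁻¹ ∈ center Q := fun j hj => h j (List.mem_cons_of_mem i hj)
    simp only [List.map_cons, List.prod_cons, ih hl]
    rw [mul_assoc (a' i * (a i)⁻¹), ← mul_assoc _ (a i),
      ← mem_center_iff.mp (List.prod_map_mem_center hl) (a i)]
    group

theorem List.prod_map_reverse_take_mul_drop_eq_of_mem_center
    (h : ∀ i ∈ l, a' i * (a i)⁻¹ ∈ center Q) (α : ℕ) :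
    ((l.take α).reverse.map a').prod * ((l.drop α).reverse.map a').prod =
      (l.map fun i => a' i * (a i)⁻¹).prod *
        (((l.take α).reverse.map a).prod * ((l.drop α).reverse.map a).prod) := by
  have ht : ∀ i ∈ (l.take α).reverse, a' i * (a i)⁻¹ ∈ center Q :=
    fun i hi => h i (List.mem_of_mem_take (List.mem_reverse.mp hi))
  have hd : ∀ i ∈ (l.drop α).reverse, a' i * (a i)⁻¹ ∈ center Q :=
    fun i hi => h i (List.mem_of_mem_drop (List.mem_reverse.mp hi))
  have hperm : ((l.take α).reverse ++ (l.drop α).reverse).Perm l := by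
    simpa only [List.take_append_drop] using
      (List.reverse_perm (l.take α)).append (List.reverse_perm (l.drop α))
  rw [List.prod_map_eq_mul_prod_map_of_mem_center ht,
    List.prod_map_eq_mul_prod_map_of_mem_center hd,
    ← hperm.prod_map_eq_of_mem_center (fun i hi => h i (hperm.subset hi)),
    List.map_append, List.prod_append]
  have hcomm : Commute ((l.take α).reverse.map a).prod
      ((l.drop α).reverse.map fun i => a' i * (a i)⁻¹).prod :=
    mem_center_iff.mp (List.prod_map_mem_center hd) _
  simp only [mul_assoc, hcomm.left_comm]

end CentralCorrection

namespace Rybnikov7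

variable {n : ℕ} {P : Type*}

abbrev F₄ (n : ℕ) := F n ⧸ (⊤ : Subgroup (F n)).lowerCentralSeries 3

theorem mem_sList [Fintype P] {inc : Fin (n + 1) → P → Prop} {p : P} {i : Fin n} :
    i ∈ sList inc p ↔ inc i.succ p := by
  simp [sList]

section CongruentData

variable {g g' : Fin n → P → F n}

theorem mk_wp_mul_inv_mem_center {i : Fin n} {p : P}
    (h : g i p * (g' i p)⁻¹ ∈ commutator (F n)) :
    (wp g p i : F₄ n) * (wp g' p i : F₄ n)⁻¹ ∈ center (F₄ n) :=
  QuotientGroup.mk_mem_center_of_mem_lowerCentralSeries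
    (conj_mul_inv_conj_mem_lowerCentralSeries_two h)

variable [Fintype P] {inc : Fin (n + 1) → P → Prop}

def CongruentModCommutator (inc : Fin (n + 1) → P → Prop) (g g' : Fin n → P → F n) : Prop :=
  ∀ (i : Fin n) (p : P), ¬ inc 0 p → inc i.succ p → g i p * (g' i p)⁻¹ ∈ commutator (F n)

theorem mk_cword_eq (hgg' : CongruentModCommutator inc g g') {p : P} (h0 : ¬ inc 0 p) (α : ℕ) :
    (cword inc g p α : F₄ n) =
      ((sList inc p).map fun i => (wp g p i : F₄ n) * (wp g' p i : F₄ n)⁻¹).prod *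
        cword inc g' p α := by
  have mk_prod (l : List (F n)) : ((l.prod : F n) : F₄ n) = (l.map (↑)).prod :=
    map_list_prod (QuotientGroup.mk' _) l
  simp only [cword, QuotientGroup.mk_mul, mk_prod, List.map_map]
  exact List.prod_map_reverse_take_mul_drop_eq_of_mem_center
    (fun i hi => mk_wp_mul_inv_mem_center (hgg' i p h0 (mem_sList.mp hi))) α

theorem mk_relator_eq (hgg' : CongruentModCommutator inc g g') {p : P} (h0 : ¬ inc 0 p) (α β : ℕ) :
    ((cword inc g p α)⁻¹ * cword inc g p β : F₄ n) =
      ((cword inc g' p α)⁻¹ * cword inc g' p β : F n) := by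
  simp only [QuotientGroup.mk_mul, QuotientGroup.mk_inv, mk_cword_eq hgg' h0]
  group

theorem image_mk_relSet_eq (hgg' : CongruentModCommutator inc g g') :
    ((↑) '' relSet inc g : Set (F₄ n)) = (↑) '' relSet inc g' := by
  ext y
  constructor
  · rintro ⟨_, ⟨i, p, h0, hi, hidx, rfl⟩, rfl⟩
    exact ⟨_, ⟨i, p, h0, hi, hidx, rfl⟩, (mk_relator_eq hgg' h0 _ _).symm⟩
  · rintro ⟨_, ⟨i, p, h0, hi, hidx, rfl⟩, rfl⟩
    exact ⟨_, ⟨i, p, h0, hi, hidx, rfl⟩, mk_relator_eq hgg' h0 _ _⟩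

end CongruentData

theorem iso_mod_gamma4_of_congruent_conjugating_data_general
    [Fintype P] (inc : Fin (n + 1) → P → Prop)
    (g g' : Fin n → P → F n)
    (hgg' : ∀ (i : Fin n) (p : P), ¬ inc 0 p → inc i.succ p →
      g i p * (g' i p)⁻¹ ∈ commutator (F n)) :
    ∃ φ : (G inc g ⧸ (⊤ : Subgroup (G inc g)).lowerCentralSeries 3) ≃*
          (G inc g' ⧸ (⊤ : Subgroup (G inc g')).lowerCentralSeries 3),
      ∀ i : Fin n,
        φ (QuotientGroup.mk (PresentedGroup.of i)) *
          (QuotientGroup.mk (PresentedGroup.of i) :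
            G inc g' ⧸ (⊤ : Subgroup (G inc g')).lowerCentralSeries 3)⁻¹ ∈
          commutator (G inc g' ⧸ (⊤ : Subgroup (G inc g')).lowerCentralSeries 3) := by
  have hM : normalClosure (relSet inc g) ⊔ (⊤ : Subgroup (F n)).lowerCentralSeries 3 =
      normalClosure (relSet inc g') ⊔ (⊤ : Subgroup (F n)).lowerCentralSeries 3 := by
    rw [normalClosure_sup_eq_comap, normalClosure_sup_eq_comap, image_mk_relSet_eq hgg']
  refine ⟨(PresentedGroup.quotientLowerCentralSeriesEquiv _ 3).trans
    ((QuotientGroup.quotientMulEquivOfEq hM).trans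
      (PresentedGroup.quotientLowerCentralSeriesEquiv _ 3).symm), fun i => ?_⟩
  rw [MulEquiv.trans_apply, MulEquiv.trans_apply,
    PresentedGroup.quotientLowerCentralSeriesEquiv_mk_of, QuotientGroup.quotientMulEquivOfEq_mk,
    ← PresentedGroup.quotientLowerCentralSeriesEquiv_mk_of, MulEquiv.symm_apply_apply,
    mul_inv_cancel]
  exact one_mem _

/-- **Proposition 2.2 of Rybnikov's paper.** For a finite non-degenerate projective
configuration, if `g ≡ g'` modulo `[F,F]` on `𝒜`, then there is an isomorphism
`G(g)/γ₄G(g) ≃ G(g')/γ₄G(g')` carrying each generator class to an element congruent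
to the corresponding generator class modulo the commutator subgroup
(`lowerCentralSeries G 3 = γ₄ G`, as Mathlib's indexing starts at `0`). -/
theorem iso_mod_gamma4_of_congruent_conjugating_data
    [Fintype P] (inc : Fin (n + 1) → P → Prop)
    (unique_meet : ∀ i j : Fin (n + 1), i ≠ j → ∃! p : P, inc i p ∧ inc j p)
    (point_on_two : ∀ p : P, ∃ i j : Fin (n + 1), i ≠ j ∧ inc i p ∧ inc j p)
    (nondeg : ∃ p q : P, p ≠ q)
    (g g' : Fin n → P → F n)
    (hgg' : ∀ (i : Fin n) (p : P), ¬ inc 0 p → inc i.succ p →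
      g i p * (g' i p)⁻¹ ∈ commutator (F n)) :
    ∃ φ : (G inc g ⧸ (⊤ : Subgroup (G inc g)).lowerCentralSeries 3) ≃*
          (G inc g' ⧸ (⊤ : Subgroup (G inc g')).lowerCentralSeries 3),
      ∀ i : Fin n,
        φ (QuotientGroup.mk (PresentedGroup.of i)) *
          (QuotientGroup.mk (PresentedGroup.of i) :
            G inc g' ⧸ (⊤ : Subgroup (G inc g')).lowerCentralSeries 3)⁻¹ ∈
          commutator (G inc g' ⧸ (⊤ : Subgroup (G inc g')).lowerCentralSeries 3) :=
  iso_mod_gamma4_of_congruent_conjugating_data_general inc g g' hgg'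

end Rybnikov7
end
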